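/- Let d = 3 and let μ, β > 0 be real numbers. Then for all twice continuously differentiable, ℤ³-periodic, divergence-free vector fields y, z : ℝ³ → ℝ³ one has μ·∫_Q ‖Dy(x) − Dz(x)‖_F² dx + ∫_Q ⟨((y·∇)y)(x) − ((z·∇)z)(x), y(x) − z(x)⟩ dx + β·∫_Q ⟨‖y(x)‖²y(x) − ‖z(x)‖²z(x), y(x) − z(x)⟩ dx ≥ (1/2)·(β − 1/(2μ))·∫_Q ‖z(x)‖²·‖y(x) − z(x)‖² dx, where Q = [0,1]³; in particular, if 2βμ ≥ 1 the left-hand side is nonnegative. -/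

import Mathlib

open MeasureTheory RealInnerProductSpace

noncomputable section

/-- The unit periodicity cell `Q = [0,1]^d` in `ℝ^d`. -/
def unitCube (d : ℕ) : Set (EuclideanSpace ℝ (Fin d)) :=
  {x | ∀ i, x i ∈ Set.Icc (0 : ℝ) 1}

/-- A vector field `u : ℝ^d → ℝ^d` is `ℤ^d`-periodic if `u(x + k) = u(x)`
for all `x ∈ ℝ^d` and `k ∈ ℤ^d`. -/
def IsZdPeriodic {d : ℕ} (u : EuclideanSpace ℝ (Fin d) → EuclideanSpace ℝ (Fin d)) : Prop :=
  ∀ (x : EuclideanSpace ℝ (Fin d)) (k : Fin d → ℤ),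
    u (x + (WithLp.equiv 2 (Fin d → ℝ)).symm (fun i => (k i : ℝ))) = u x

/-- A vector field `u : ℝ^d → ℝ^d` is divergence-free if `∑ i ∂ᵢ uᵢ(x) = 0` for all `x`. -/
def IsDivFree {d : ℕ} (u : EuclideanSpace ℝ (Fin d) → EuclideanSpace ℝ (Fin d)) : Prop :=
  ∀ x : EuclideanSpace ℝ (Fin d),
    ∑ i, fderiv ℝ u x (EuclideanSpace.single i 1) i = 0

/-- The squared Frobenius (Hilbert–Schmidt) norm of a linear map `ℝ^d → ℝ^d`,
as the sum of the squared Euclidean norms of its columns. -/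
def frobSq {d : ℕ} (L : EuclideanSpace ℝ (Fin d) →L[ℝ] EuclideanSpace ℝ (Fin d)) : ℝ :=
  ∑ j, ‖L (EuclideanSpace.single j 1)‖ ^ 2

namespace CBFAux

abbrev E3 := EuclideanSpace ℝ (Fin 3)
abbrev toE : (Fin 3 → ℝ) → E3 := (WithLp.equiv 2 (Fin 3 → ℝ)).symm
abbrev eL : E3 ≃L[ℝ] (Fin 3 → ℝ) := PiLp.continuousLinearEquiv 2 ℝ (fun _ : Fin 3 => ℝ)

lemma euclid_decomp {d : ℕ} (w : EuclideanSpace ℝ (Fin d)) :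
    ∑ i, w i • EuclideanSpace.single i (1:ℝ) = w := by
  have := (EuclideanSpace.basisFun (Fin d) ℝ).sum_repr w
  simpa [EuclideanSpace.basisFun_apply, EuclideanSpace.basisFun_repr] using this

lemma frob_nonneg {d : ℕ} (L : EuclideanSpace ℝ (Fin d) →L[ℝ] EuclideanSpace ℝ (Fin d)) :
    0 ≤ frobSq L := Finset.sum_nonneg fun _ _ => sq_nonneg _

lemma frob_bound {d : ℕ} (L : EuclideanSpace ℝ (Fin d) →L[ℝ] EuclideanSpace ℝ (Fin d))
    (v : EuclideanSpace ℝ (Fin d)) : ‖L v‖ ^ 2 ≤ frobSq L * ‖v‖ ^ 2 := by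
  have h1 : L v = ∑ i, v i • L (EuclideanSpace.single i (1:ℝ)) := by
    conv_lhs => rw [← euclid_decomp v]
    simp [map_sum]
  have h2 : ‖L v‖ ≤ ∑ i, |v i| * ‖L (EuclideanSpace.single i (1:ℝ))‖ := by
    rw [h1]
    refine (norm_sum_le _ _).trans ?_
    refine Finset.sum_le_sum fun i _ => ?_
    rw [norm_smul, Real.norm_eq_abs]
  have h3 := Finset.sum_mul_sq_le_sq_mul_sq Finset.univ (fun i => |v i|)
      (fun i => ‖L (EuclideanSpace.single i (1:ℝ))‖)
  have hv : ∑ i, |v i| ^ 2 = ‖v‖ ^ 2 := by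
    rw [EuclideanSpace.norm_eq, Real.sq_sqrt (by positivity)]
    simp [sq_abs]
  calc ‖L v‖ ^ 2 ≤ (∑ i, |v i| * ‖L (EuclideanSpace.single i (1:ℝ))‖) ^ 2 :=
        pow_le_pow_left₀ (norm_nonneg _) h2 2
    _ ≤ (∑ i, |v i| ^ 2) * (∑ i, ‖L (EuclideanSpace.single i (1:ℝ))‖ ^ 2) := h3
    _ = frobSq L * ‖v‖ ^ 2 := by rw [hv, frobSq]; ring

lemma cube_mono {d : ℕ} (a b : EuclideanSpace ℝ (Fin d)) :
    (1/2) * (‖b‖^2 * ‖a - b‖^2) ≤ ⟪(‖a‖^2) • a - (‖b‖^2) • b, a - b⟫ := by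
  have hip : ⟪(‖a‖^2) • a - (‖b‖^2) • b, a - b⟫
      = ‖a‖^4 + ‖b‖^4 - (‖a‖^2 + ‖b‖^2) * ⟪a, b⟫ := by
    rw [inner_sub_left, inner_sub_right, inner_sub_right, real_inner_smul_left,
      real_inner_smul_left, real_inner_smul_left, real_inner_smul_left,
      real_inner_self_eq_norm_sq, real_inner_self_eq_norm_sq, real_inner_comm b a]
    ring
  have hns : ‖a - b‖^2 = ‖a‖^2 - 2 * ⟪a, b⟫ + ‖b‖^2 := norm_sub_sq_real a b
  nlinarith [sq_nonneg (‖a‖^2 - ‖b‖^2), sq_nonneg ‖a‖]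

/-- Pointwise key inequality. -/
lemma pointwise_bound (μ β : ℝ) (hμ : 0 < μ) (hβ : 0 ≤ β) {d : ℕ}
    (L : EuclideanSpace ℝ (Fin d) →L[ℝ] EuclideanSpace ℝ (Fin d))
    (a b : EuclideanSpace ℝ (Fin d)) :
    (1/2) * (β - 1/(2*μ)) * (‖b‖^2 * ‖a - b‖^2)
      ≤ μ * frobSq L - ⟪b, L (a - b)⟫ + β * ⟪(‖a‖^2) • a - (‖b‖^2) • b, a - b⟫ := by
  have h1 := frob_bound L (a - b)
  have h2 := cube_mono a b
  have h3 : ⟪b, L (a - b)⟫ ≤ ‖b‖ * ‖L (a - b)‖ := real_inner_le_norm _ _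
  have hF := frob_nonneg L
  have key : 0 ≤ μ * frobSq L - ‖b‖ * ‖L (a - b)‖ + (1/(4*μ)) * (‖b‖^2 * ‖a - b‖^2) := by
    set t : ℝ := ‖L (a - b)‖ with ht
    set s : ℝ := ‖b‖ with hs
    set r : ℝ := ‖a - b‖ with hrr
    rcases eq_or_ne (a - b) 0 with h | h
    · have hL0 : L (a - b) = 0 := by rw [h, map_zero]
      have ht0 : t = 0 := by rw [ht, hL0, norm_zero]
      have hr0 : r = 0 := by rw [hrr, h, norm_zero]
      rw [ht0, hr0]
      have := mul_nonneg hμ.le hF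
      nlinarith
    · have hr : 0 < r := norm_pos_iff.mpr h
      have hr2 : 0 < r^2 := by positivity
      have h4 : 0 ≤ r^2 * (4*μ^2*(frobSq L) - 4*μ*(s*t) + s^2*r^2) := by
        have hm : 4*μ^2*t^2 ≤ 4*μ^2*((frobSq L)*r^2) :=
          mul_le_mul_of_nonneg_left h1 (by positivity)
        nlinarith [sq_nonneg (2*μ*t - s*r^2)]
      have hX : 0 ≤ 4*μ^2*(frobSq L) - 4*μ*(s*t) + s^2*r^2 :=
        (mul_nonneg_iff_of_pos_left hr2).mp h4
      have hscaled : 0 ≤ (1/(4*μ))*(4*μ^2*(frobSq L) - 4*μ*(s*t) + s^2*r^2) :=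
        mul_nonneg (by positivity) hX
      have heq : (1/(4*μ))*(4*μ^2*(frobSq L) - 4*μ*(s*t) + s^2*r^2)
          = μ*(frobSq L) - s*t + (1/(4*μ))*(s^2*r^2) := by
        field_simp
      linarith [heq ▸ hscaled]
  have h2' : β * ((1/2) * (‖b‖^2 * ‖a - b‖^2)) ≤ β * ⟪(‖a‖^2) • a - (‖b‖^2) • b, a - b⟫ :=
    mul_le_mul_of_nonneg_left h2 hβ
  have hμ' : (0:ℝ) < 4 * μ := by linarith
  have hexp : (1/2) * (β - 1/(2*μ)) * (‖b‖^2 * ‖a - b‖^2)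
      = β * ((1/2) * (‖b‖^2 * ‖a - b‖^2)) - (1/(4*μ)) * (‖b‖^2 * ‖a - b‖^2) := by
    field_simp
    ring
  linarith

lemma preimage_unitCube : toE ⁻¹' (unitCube 3) = Set.Icc (0 : Fin 3 → ℝ) 1 := by
  ext p
  simp [unitCube, Set.mem_Icc, Pi.le_def, forall_and]

lemma isCompact_unitCube : IsCompact (unitCube 3) := by
  have himg : unitCube 3 = toE '' (Set.Icc 0 1) := by
    rw [← preimage_unitCube, Set.image_preimage_eq _ (Equiv.surjective _)]
  rw [himg]
  exact isCompact_Icc.image eL.symm.continuous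

lemma measurableSet_unitCube : MeasurableSet (unitCube 3) :=
  isCompact_unitCube.isClosed.measurableSet

lemma integrableOn_unitCube {g : E3 → ℝ} (hg : Continuous g) :
    IntegrableOn g (unitCube 3) :=
  hg.continuousOn.integrableOn_compact isCompact_unitCube

lemma setIntegral_unitCube (g : E3 → ℝ) :
    ∫ x in unitCube 3, g x = ∫ p in Set.Icc (0 : Fin 3 → ℝ) 1, g (toE p) := by
  have h := (EuclideanSpace.volume_preserving_symm_measurableEquiv_toLp (Fin 3)).symm
  have hemb : MeasurableEmbedding toE :=
    (MeasurableEquiv.toLp 2 (Fin 3 → ℝ)).measurableEmbedding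
  rw [← h.setIntegral_preimage_emb hemb g (unitCube 3),
    show (⇑(MeasurableEquiv.toLp 2 (Fin 3 → ℝ)).symm.symm ⁻¹' unitCube 3) = Set.Icc 0 1 from
      preimage_unitCube]
  rfl

lemma insertNth_front_eq (i : Fin 3) (x : Fin 2 → ℝ) :
    (i.insertNth (1:ℝ) x : Fin 3 → ℝ) = (i.insertNth (0:ℝ) x : Fin 3 → ℝ) + Pi.single i 1 := by
  funext j
  refine Fin.succAboveCases i ?_ ?_ j
  · simp
  · intro k
    simp [Fin.insertNth_apply_succAbove, Pi.single_eq_of_ne (Fin.succAbove_ne i k)]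

/-- The integral over the unit cube of the divergence of a `C¹` periodic field vanishes. -/
lemma integral_div_eq_zero (F : E3 → E3) (hF : ContDiff ℝ 1 F) (hper : IsZdPeriodic F) :
    ∫ x in unitCube 3, (∑ i, fderiv ℝ F x (EuclideanSpace.single i 1) i) = 0 := by
  classical
  set f : (Fin 3 → ℝ) → (Fin 3 → ℝ) := fun p => (eL) (F (toE p)) with hf
  set f' : (Fin 3 → ℝ) → (Fin 3 → ℝ) →L[ℝ] (Fin 3 → ℝ) := fun p =>
    ((eL : E3 →L[ℝ] (Fin 3 → ℝ)).comp ((fderiv ℝ F (toE p)).comp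
      (eL.symm : (Fin 3 → ℝ) →L[ℝ] E3))) with hf'
  have hFd : Differentiable ℝ F := hF.differentiable one_ne_zero
  have hfd : ∀ p, HasFDerivAt f (f' p) p := by
    intro p
    have h1 : HasFDerivAt F (fderiv ℝ F (toE p)) (toE p) := (hFd (toE p)).hasFDerivAt
    have h2 : HasFDerivAt (⇑eL.symm) (eL.symm : (Fin 3 → ℝ) →L[ℝ] E3) p := eL.symm.hasFDerivAt
    exact (eL.hasFDerivAt).comp p (h1.comp p h2)
  have hdiv : ∀ p, (∑ i, f' p (Pi.single i 1) i)
      = ∑ i, fderiv ℝ F (toE p) (EuclideanSpace.single i 1) i := fun p => rfl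
  have hconF : Continuous fun x : E3 => ∑ i, fderiv ℝ F x (EuclideanSpace.single i 1) i := by
    have hc : Continuous fun x : E3 => fderiv ℝ F x := (hF.continuous_fderiv one_ne_zero)
    exact continuous_finset_sum _ fun i _ =>
      (continuous_apply i).comp ((PiLp.continuous_ofLp 2 (fun _ : Fin 3 => ℝ)).comp
        ((ContinuousLinearMap.apply ℝ E3 (EuclideanSpace.single i 1)).continuous.comp hc))
  have hconf : Continuous f := eL.continuous.comp (hF.continuous.comp eL.symm.continuous)
  have Hi : IntegrableOn (fun p => ∑ i, f' p (Pi.single i 1) i)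
      (Set.Icc (0 : Fin 3 → ℝ) 1) := by
    have hcont : Continuous fun p => ∑ i, f' p (Pi.single i 1) i := by
      have := hconF.comp eL.symm.continuous
      exact this
    exact hcont.continuousOn.integrableOn_compact isCompact_Icc
  have hdivthm := MeasureTheory.integral_divergence_of_hasFDerivAt_off_countable
    (0 : Fin 3 → ℝ) 1 (by intro i; norm_num) f f' ∅ Set.countable_empty
    hconf.continuousOn (fun x _ => hfd x) Hi
  have hfaces : ∀ i : Fin 3,
      ((∫ x in Set.Icc ((0: Fin 3 → ℝ) ∘ i.succAbove) ((1: Fin 3 → ℝ) ∘ i.succAbove),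
          f (i.insertNth ((1 : Fin 3 → ℝ) i) x) i)
        - ∫ x in Set.Icc ((0: Fin 3 → ℝ) ∘ i.succAbove) ((1: Fin 3 → ℝ) ∘ i.succAbove),
          f (i.insertNth ((0 : Fin 3 → ℝ) i) x) i) = 0 := by
    intro i
    have hfun : (fun x : Fin 2 → ℝ => f (i.insertNth ((1 : Fin 3 → ℝ) i) x) i)
        = fun x => f (i.insertNth ((0 : Fin 3 → ℝ) i) x) i := by
      funext x
      have h1 : ((1 : Fin 3 → ℝ) i) = (1:ℝ) := rfl
      have h0 : ((0 : Fin 3 → ℝ) i) = (0:ℝ) := rfl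
      rw [h1, h0, insertNth_front_eq]
      have hadd : toE ((i.insertNth (0:ℝ) x : Fin 3 → ℝ) + Pi.single i 1)
          = toE (i.insertNth (0:ℝ) x : Fin 3 → ℝ)
            + (WithLp.equiv 2 (Fin 3 → ℝ)).symm
                (fun j => (((Pi.single i 1 : Fin 3 → ℤ) j : ℝ))) := by
        have : (fun j => (((Pi.single i 1 : Fin 3 → ℤ) j : ℝ))) = (Pi.single i 1 : Fin 3 → ℝ) := by
          funext j
          simp only [Pi.single_apply]
          split_ifs <;> simp
        rw [this]
        rfl
      simp only [hf]
      rw [hadd, hper]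
    rw [hfun, sub_self]
  rw [setIntegral_unitCube]
  have : (fun p => ∑ i, fderiv ℝ F (toE p) (EuclideanSpace.single i 1) i)
      = fun p => ∑ i, f' p (Pi.single i 1) i := by
    funext p; rw [hdiv]
  rw [this, hdivthm, Finset.sum_eq_zero fun i _ => hfaces i]

/-- Skew symmetry of the trilinear form, from the divergence theorem. -/
lemma skew_integral (u v₁ v₂ : E3 → E3)
    (hu : ContDiff ℝ 1 u) (h1 : ContDiff ℝ 1 v₁) (h2 : ContDiff ℝ 1 v₂)
    (huper : IsZdPeriodic u) (h1per : IsZdPeriodic v₁) (h2per : IsZdPeriodic v₂)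
    (hudiv : IsDivFree u) :
    ∫ x in unitCube 3,
      (⟪fderiv ℝ v₁ x (u x), v₂ x⟫ + ⟪v₁ x, fderiv ℝ v₂ x (u x)⟫) = 0 := by
  classical
  set φ : E3 → ℝ := fun x => ⟪v₁ x, v₂ x⟫ with hφ
  set F : E3 → E3 := fun x => φ x • u x with hF
  have hφc : ContDiff ℝ 1 φ := h1.inner ℝ h2
  have hFc : ContDiff ℝ 1 F := hφc.smul hu
  have hFper : IsZdPeriodic F := by
    intro x k
    simp only [hF, hφ, h1per x k, h2per x k, huper x k]
  have hkey : ∀ x, ∑ i, fderiv ℝ F x (EuclideanSpace.single i 1) i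
      = ⟪fderiv ℝ v₁ x (u x), v₂ x⟫ + ⟪v₁ x, fderiv ℝ v₂ x (u x)⟫ := by
    intro x
    have hφd : DifferentiableAt ℝ φ x := (hφc.differentiable one_ne_zero) x
    have hud : DifferentiableAt ℝ u x := (hu.differentiable one_ne_zero) x
    have hDF : fderiv ℝ F x = φ x • fderiv ℝ u x + (fderiv ℝ φ x).smulRight (u x) :=
      fderiv_smul hφd hud
    have hcoord : ∀ i : Fin 3, fderiv ℝ F x (EuclideanSpace.single i 1) i
        = φ x * (fderiv ℝ u x (EuclideanSpace.single i 1) i)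
          + (fderiv ℝ φ x (EuclideanSpace.single i 1)) * (u x i) := by
      intro i
      rw [hDF]
      simp [ContinuousLinearMap.smulRight_apply, mul_comm]
    rw [Finset.sum_congr rfl fun i _ => hcoord i, Finset.sum_add_distrib, ← Finset.mul_sum,
      hudiv x, mul_zero, zero_add]
    have hlin : ∑ i, (fderiv ℝ φ x (EuclideanSpace.single i 1)) * (u x i)
        = fderiv ℝ φ x (u x) := by
      conv_rhs => rw [← euclid_decomp (u x)]
      rw [map_sum]
      refine Finset.sum_congr rfl fun i _ => ?_
      rw [ContinuousLinearMap.map_smul, smul_eq_mul, mul_comm]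
    rw [hlin, fderiv_inner_apply ℝ ((h1.differentiable one_ne_zero) x) ((h2.differentiable one_ne_zero) x)]
    exact add_comm _ _
  calc ∫ x in unitCube 3, (⟪fderiv ℝ v₁ x (u x), v₂ x⟫ + ⟪v₁ x, fderiv ℝ v₂ x (u x)⟫)
      = ∫ x in unitCube 3, ∑ i, fderiv ℝ F x (EuclideanSpace.single i 1) i :=
        setIntegral_congr_fun measurableSet_unitCube fun x _ => (hkey x).symm
    _ = 0 := integral_div_eq_zero F hFc hFper

lemma cont_apply {L : E3 → (E3 →L[ℝ] E3)} {v : E3 → E3}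
    (hL : Continuous L) (hv : Continuous v) : Continuous fun x => L x (v x) :=
  isBoundedBilinearMap_apply.continuous.comp (hL.prodMk hv)

end CBFAux

open CBFAux in
/-- Global monotonicity (3.14) in the critical case `d = r = 3` (Remark 3.2). -/
theorem cbf_critical_global_monotone
    (μ β : ℝ) (hμ : 0 < μ) (hβ : 0 < β)
    (y z : EuclideanSpace ℝ (Fin 3) → EuclideanSpace ℝ (Fin 3))
    (hy : ContDiff ℝ 2 y) (hz : ContDiff ℝ 2 z)
    (hyper : IsZdPeriodic y) (hzper : IsZdPeriodic z)
    (hydiv : IsDivFree y) (hzdiv : IsDivFree z) :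
    μ * (∫ x in unitCube 3, frobSq (fderiv ℝ y x - fderiv ℝ z x))
      + (∫ x in unitCube 3, ⟪fderiv ℝ y x (y x) - fderiv ℝ z x (z x), y x - z x⟫)
      + β * (∫ x in unitCube 3, ⟪(‖y x‖ ^ 2) • y x - (‖z x‖ ^ 2) • z x, y x - z x⟫)
    ≥ (1 / 2) * (β - 1 / (2 * μ)) *
        ∫ x in unitCube 3, ‖z x‖ ^ 2 * ‖y x - z x‖ ^ 2 ∧
    (1 ≤ 2 * β * μ →
      0 ≤ μ * (∫ x in unitCube 3, frobSq (fderiv ℝ y x - fderiv ℝ z x))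
        + (∫ x in unitCube 3, ⟪fderiv ℝ y x (y x) - fderiv ℝ z x (z x), y x - z x⟫)
        + β * (∫ x in unitCube 3,
            ⟪(‖y x‖ ^ 2) • y x - (‖z x‖ ^ 2) • z x, y x - z x⟫)) := by
  classical
  set w : E3 → E3 := fun x => y x - z x with hwdef
  have hy1 : ContDiff ℝ 1 y := hy.of_le one_le_two
  have hz1 : ContDiff ℝ 1 z := hz.of_le one_le_two
  have hw1 : ContDiff ℝ 1 w := hy1.sub hz1
  have hyd : Differentiable ℝ y := hy1.differentiable one_ne_zero
  have hzd : Differentiable ℝ z := hz1.differentiable one_ne_zero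
  have hwd : ∀ x, fderiv ℝ w x = fderiv ℝ y x - fderiv ℝ z x := fun x =>
    fderiv_sub (hyd x) (hzd x)
  have hwper : IsZdPeriodic w := by
    intro x k
    simp only [hwdef, hyper x k, hzper x k]
  have hwdiv : IsDivFree w := by
    intro x
    rw [show (∑ i, fderiv ℝ w x (EuclideanSpace.single i 1) i)
        = ∑ i, (fderiv ℝ y x (EuclideanSpace.single i 1) i
            - fderiv ℝ z x (EuclideanSpace.single i 1) i) from
      Finset.sum_congr rfl fun i _ => by rw [hwd x]; rfl]
    rw [Finset.sum_sub_distrib, hydiv x, hzdiv x, sub_zero]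
  -- continuity of derivatives
  have hDy : Continuous fun x => fderiv ℝ y x := hy1.continuous_fderiv one_ne_zero
  have hDz : Continuous fun x => fderiv ℝ z x := hz1.continuous_fderiv one_ne_zero
  have hDw : Continuous fun x => fderiv ℝ w x := hw1.continuous_fderiv one_ne_zero
  have hyc : Continuous y := hy1.continuous
  have hzc : Continuous z := hz1.continuous
  have hwc : Continuous w := hyc.sub hzc
  -- the integrands
  set A : E3 → ℝ := fun x => frobSq (fderiv ℝ y x - fderiv ℝ z x) with hA
  set B : E3 → ℝ := fun x => ⟪fderiv ℝ y x (y x) - fderiv ℝ z x (z x), y x - z x⟫ with hB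
  set C : E3 → ℝ := fun x => ⟪(‖y x‖ ^ 2) • y x - (‖z x‖ ^ 2) • z x, y x - z x⟫ with hC
  set R : E3 → ℝ := fun x => ‖z x‖ ^ 2 * ‖y x - z x‖ ^ 2 with hR
  set g₁ : E3 → ℝ := fun x => ⟪fderiv ℝ w x (y x), w x⟫ with hg₁
  set g₂ : E3 → ℝ := fun x => ⟪fderiv ℝ z x (w x), w x⟫ with hg₂
  set g₃ : E3 → ℝ := fun x => ⟪z x, fderiv ℝ w x (w x)⟫ with hg₃
  -- continuity of integrands
  have hAc : Continuous A := by
    refine continuous_finset_sum _ fun j _ => ?_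
    exact ((cont_apply (hDy.sub hDz) continuous_const).norm.pow 2)
  have hBc : Continuous B :=
    ((cont_apply hDy hyc).sub (cont_apply hDz hzc)).inner (hyc.sub hzc)
  have hCc : Continuous C :=
    (((hyc.norm.pow 2).smul hyc).sub ((hzc.norm.pow 2).smul hzc)).inner (hyc.sub hzc)
  have hRc : Continuous R := ((hzc.norm.pow 2).mul ((hyc.sub hzc).norm.pow 2))
  have hg₁c : Continuous g₁ := (cont_apply hDw hyc).inner hwc
  have hg₂c : Continuous g₂ := (cont_apply hDz hwc).inner hwc
  have hg₃c : Continuous g₃ := hzc.inner (cont_apply hDw hwc)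
  -- Step 1 : ∫ g₁ = 0
  have hint1 : ∫ x in unitCube 3, g₁ x = 0 := by
    have hs := skew_integral y w w hy1 hw1 hw1 hyper hwper hwper hydiv
    have heq : (fun x => (⟪fderiv ℝ w x (y x), w x⟫ + ⟪w x, fderiv ℝ w x (y x)⟫))
        = fun x => 2 * g₁ x := by
      funext x
      simp only [hg₁]
      rw [real_inner_comm (w x) ((fderiv ℝ w x) (y x))]
      ring
    rw [heq] at hs
    rw [MeasureTheory.integral_const_mul] at hs
    linarith
  -- Step 2 : ∫ g₂ = - ∫ g₃
  have hint2 : ∫ x in unitCube 3, g₂ x = - ∫ x in unitCube 3, g₃ x := by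
    have hs := skew_integral w z w hw1 hz1 hw1 hwper hzper hwper hwdiv
    have heq : (fun x => (⟪fderiv ℝ z x (w x), w x⟫ + ⟪z x, fderiv ℝ w x (w x)⟫))
        = fun x => g₂ x + g₃ x := rfl
    rw [heq, MeasureTheory.integral_add
      ((integrableOn_unitCube hg₂c)) ((integrableOn_unitCube hg₃c))] at hs
    linarith
  -- Step 3 : ∫ B = - ∫ g₃
  have hintB : ∫ x in unitCube 3, B x = - ∫ x in unitCube 3, g₃ x := by
    have hBpt : B = fun x => g₁ x + g₂ x := by
      funext x
      have hvec : fderiv ℝ y x (y x) - fderiv ℝ z x (z x)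
          = fderiv ℝ w x (y x) + fderiv ℝ z x (w x) := by
        rw [hwd x]
        simp only [ContinuousLinearMap.sub_apply, hwdef, map_sub]
        abel
      simp only [hB, hg₁, hg₂, hvec, inner_add_left]
      rfl
    rw [hBpt, MeasureTheory.integral_add
      ((integrableOn_unitCube hg₁c)) ((integrableOn_unitCube hg₂c)), hint1, hint2]
    ring
  -- Step 4 : pointwise inequality
  have hpt : ∀ x, (1/2) * (β - 1/(2*μ)) * R x ≤ μ * A x - g₃ x + β * C x := by
    intro x
    have := pointwise_bound μ β hμ hβ.le (fderiv ℝ y x - fderiv ℝ z x) (y x) (z x)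
    simpa only [hA, hB, hC, hR, hg₃, hwd x] using this
  -- Step 5 : assemble
  have hGint : IntegrableOn (fun x => μ * A x - g₃ x + β * C x) (unitCube 3) :=
    integrableOn_unitCube (((continuous_const.mul hAc).sub hg₃c).add (continuous_const.mul hCc))
  have hRint : IntegrableOn (fun x => (1/2) * (β - 1/(2*μ)) * R x) (unitCube 3) :=
    integrableOn_unitCube (continuous_const.mul hRc)
  have hmono : ∫ x in unitCube 3, (1/2) * (β - 1/(2*μ)) * R x
      ≤ ∫ x in unitCube 3, (μ * A x - g₃ x + β * C x) :=
    setIntegral_mono_on hRint hGint measurableSet_unitCube fun x _ => hpt x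
  have hsplit : ∫ x in unitCube 3, (μ * A x - g₃ x + β * C x)
      = μ * (∫ x in unitCube 3, A x) + (∫ x in unitCube 3, B x)
        + β * (∫ x in unitCube 3, C x) := by
    rw [MeasureTheory.integral_add (f := fun x => μ * A x - g₃ x) (g := fun x => β * C x)
        (integrableOn_unitCube ((continuous_const.mul hAc).sub hg₃c))
        (integrableOn_unitCube (continuous_const.mul hCc)),
      MeasureTheory.integral_sub (f := fun x => μ * A x) (g := g₃) (integrableOn_unitCube (continuous_const.mul hAc))
        (integrableOn_unitCube hg₃c),
      MeasureTheory.integral_const_mul, MeasureTheory.integral_const_mul, hintB]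
    ring
  have hconst : ∫ x in unitCube 3, (1/2) * (β - 1/(2*μ)) * R x
      = (1/2) * (β - 1/(2*μ)) * ∫ x in unitCube 3, R x := by
    rw [MeasureTheory.integral_const_mul]
  have hmain : (1 / 2) * (β - 1 / (2 * μ)) * (∫ x in unitCube 3, R x)
      ≤ μ * (∫ x in unitCube 3, A x) + (∫ x in unitCube 3, B x)
        + β * (∫ x in unitCube 3, C x) := by
    rw [← hconst, ← hsplit]
    exact hmono
  constructor
  · exact hmain
  · intro h2βμ
    have hRnn : 0 ≤ ∫ x in unitCube 3, R x := by
      refine MeasureTheory.setIntegral_nonneg measurableSet_unitCube fun x _ => ?_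
      simp only [hR]
      positivity
    have hco : 0 ≤ (1 / 2) * (β - 1 / (2 * μ)) := by
      have : 1 / (2 * μ) ≤ β := by
        rw [div_le_iff₀ (by linarith)]
        linarith [h2βμ]
      linarith
    calc (0:ℝ) ≤ (1 / 2) * (β - 1 / (2 * μ)) * (∫ x in unitCube 3, R x) :=
          mul_nonneg hco hRnn
      _ ≤ _ := hmain

end
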